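/- arXiv:2302.05259 — 2 statements merged into one kernel-verified Lean document; each statement's English description precedes it below -/
import Mathlib

section
/- Let x_s ~ N(√(ᾱ^SS_s) x₀, 1-ᾱ^SS_s) independently for s = t,…,T, where ᾱ^SS_s ∈ (0,1) satisfies ∑_{s=t}^T ᾱ^SS_s/(1-ᾱ^SS_s) = ᾱ_t/(1-ᾱ_t) for some ᾱ_t ∈ (0,1). Define G_t = ((1-ᾱ_t)/√(ᾱ_t)) ∑_{s=t}^T √(ᾱ^SS_s) x_s/(1-ᾱ^SS_s). Then G_t ~ N(√(ᾱ_t) x₀, 1-ᾱ_t). -/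
/-!
A linear combination `∑ aᵢ xᵢ` of independent Gaussians `xᵢ ~ N(mᵢ, vᵢ)` is Gaussian with mean
`∑ aᵢ mᵢ` and variance `∑ aᵢ² vᵢ` (compare characteristic functions). For the weights
`a_s = c √ᾱ_s / (1 - ᾱ_s)` both the mean `c ∑ ρ_s x₀` and the variance `c² ∑ ρ_s` only involve the
total signal-to-noise ratio `∑ ρ_s`, `ρ_s = ᾱ_s / (1 - ᾱ_s)`; with `∑ ρ_s = ᾱ / (1 - ᾱ)` and
`c = (1 - ᾱ) / √ᾱ` they become `√ᾱ x₀` and `1 - ᾱ`.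
-/

open MeasureTheory ProbabilityTheory NNReal

lemma map_pi_gaussianReal_sum {ι : Type*} [Fintype ι] (m : ι → ℝ) (v : ι → ℝ≥0) :
    (Measure.pi fun i => gaussianReal (m i) (v i)).map (fun x => ∑ i, x i)
      = gaussianReal (∑ i, m i) (∑ i, v i) := by
  refine Measure.ext_of_charFun ?_
  ext t
  simp only [charFun_map_sum_pi_eq_prod, Finset.prod_apply, charFun_gaussianReal,
    ← Complex.exp_sum]
  push_cast
  rw [Finset.sum_sub_distrib, ← Finset.sum_mul, ← Finset.mul_sum, ← Finset.sum_div,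
    ← Finset.sum_mul]

lemma map_pi_gaussianReal_weightedSum {ι : Type*} [Fintype ι] (a m : ι → ℝ) (v : ι → ℝ≥0) :
    (Measure.pi fun i => gaussianReal (m i) (v i)).map (fun x => ∑ i, a i * x i)
      = gaussianReal (∑ i, a i * m i) (∑ i, ⟨a i ^ 2, sq_nonneg _⟩ * v i) := by
  have hscale : MeasurePreserving (fun (x : ι → ℝ) i => a i * x i)
      (Measure.pi fun i => gaussianReal (m i) (v i))
      (Measure.pi fun i => gaussianReal (a i * m i) (⟨a i ^ 2, sq_nonneg _⟩ * v i)) :=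
    measurePreserving_pi _ _ fun i => ⟨by fun_prop, gaussianReal_map_const_mul (a i)⟩
  rw [← map_pi_gaussianReal_sum, ← hscale.map_eq, Measure.map_map (by fun_prop) hscale.measurable]
  rfl

lemma map_pi_gaussianReal_snrWeightedSum {ι : Type*} [Fintype ι] (α : ι → ℝ)
    (hα : ∀ i, α i ∈ Set.Ico (0 : ℝ) 1) (x₀ c : ℝ) :
    (Measure.pi fun i => gaussianReal (Real.sqrt (α i) * x₀) (1 - α i).toNNReal).map
        (fun x => c * ∑ i, Real.sqrt (α i) * x i / (1 - α i))
      = gaussianReal (c * (∑ i, α i / (1 - α i)) * x₀)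
          (c ^ 2 * ∑ i, α i / (1 - α i)).toNNReal := by
  have hα₀ (i : ι) : 0 ≤ α i := (hα i).1
  have hα₁ (i : ι) : 0 < 1 - α i := sub_pos.2 (hα i).2
  set a : ι → ℝ := fun i => c * Real.sqrt (α i) / (1 - α i)
  have hfun : (fun x : ι → ℝ => c * ∑ i, Real.sqrt (α i) * x i / (1 - α i))
      = fun x => ∑ i, a i * x i := by
    ext x
    rw [Finset.mul_sum]
    exact Finset.sum_congr rfl fun i _ => by ring
  have hmean (i : ι) : a i * Real.sqrt (α i) = c * (α i / (1 - α i)) := by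
    simp only [a]
    rw [mul_div_right_comm, mul_assoc, Real.mul_self_sqrt (hα₀ i)]
    ring
  have hvar (i : ι) : a i ^ 2 * (1 - α i) = c ^ 2 * (α i / (1 - α i)) := by
    have := (hα₁ i).ne'
    simp only [a]
    field_simp
    rw [Real.sq_sqrt (hα₀ i)]
  rw [hfun, map_pi_gaussianReal_weightedSum]
  congr 1
  · simp_rw [← mul_assoc, hmean, ← Finset.sum_mul, ← Finset.mul_sum]
  · refine NNReal.coe_injective ?_
    have hsnr : 0 ≤ ∑ i, α i / (1 - α i) :=
      Finset.sum_nonneg fun i _ => div_nonneg (hα₀ i) (hα₁ i).le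
    rw [Real.coe_toNNReal _ (mul_nonneg (sq_nonneg c) hsnr), NNReal.coe_sum]
    change ∑ i, a i ^ 2 * ((1 - α i).toNNReal : ℝ) = _
    simp_rw [Real.coe_toNNReal _ (hα₁ _).le, hvar, ← Finset.mul_sum]

theorem stmt1_general (t T : ℕ) (x0 : ℝ) (abSS : ℕ → ℝ) (ab : ℝ)
    (hab : ab ∈ Set.Ioo (0 : ℝ) 1)
    (hSS : ∀ s ∈ Finset.Icc t T, abSS s ∈ Set.Ioo (0 : ℝ) 1)
    (hsum : ∑ s ∈ Finset.Icc t T, abSS s / (1 - abSS s) = ab / (1 - ab)) :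
    Measure.map
        (fun x : {s // s ∈ Finset.Icc t T} → ℝ =>
          ((1 - ab) / Real.sqrt ab) *
            ∑ s : {s // s ∈ Finset.Icc t T},
              Real.sqrt (abSS s) * x s / (1 - abSS s))
        (Measure.pi fun s : {s // s ∈ Finset.Icc t T} =>
          gaussianReal (Real.sqrt (abSS s) * x0) (Real.toNNReal (1 - abSS s)))
      = gaussianReal (Real.sqrt ab * x0) (Real.toNNReal (1 - ab)) := by
  obtain ⟨hab₀, hab₁⟩ := hab
  have hab₁' : 1 - ab ≠ 0 := (sub_pos.2 hab₁).ne'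
  have hsqrt : Real.sqrt ab ^ 2 = ab := Real.sq_sqrt hab₀.le
  rw [map_pi_gaussianReal_snrWeightedSum (fun s : {s // s ∈ Finset.Icc t T} => abSS s)
      (fun s => Set.Ioo_subset_Ico_self (hSS s s.2)),
    Finset.sum_coe_sort (Finset.Icc t T) (fun s => abSS s / (1 - abSS s)), hsum]
  congr 3
  · field_simp
    exact hsqrt.symm
  · field_simp
    rw [hsqrt]

/-- If `x_s ~ N(√ᾱˢˢ_s x₀, 1−ᾱˢˢ_s)` independently for `s = t,…,T` and
`∑_s ᾱˢˢ_s/(1−ᾱˢˢ_s) = ᾱ_t/(1−ᾱ_t)`, then the tail statistic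
`G_t = ((1−ᾱ_t)/√ᾱ_t) ∑_s √ᾱˢˢ_s x_s/(1−ᾱˢˢ_s)` has law `N(√ᾱ_t x₀, 1−ᾱ_t)`. -/
theorem stmt1 (t T : ℕ) (htT : t ≤ T) (x0 : ℝ) (abSS : ℕ → ℝ) (ab : ℝ)
    (hab : ab ∈ Set.Ioo (0 : ℝ) 1)
    (hSS : ∀ s ∈ Finset.Icc t T, abSS s ∈ Set.Ioo (0 : ℝ) 1)
    (hsum : ∑ s ∈ Finset.Icc t T, abSS s / (1 - abSS s) = ab / (1 - ab)) :
    Measure.map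
        (fun x : {s // s ∈ Finset.Icc t T} → ℝ =>
          ((1 - ab) / Real.sqrt ab) *
            ∑ s : {s // s ∈ Finset.Icc t T},
              Real.sqrt (abSS s) * x s / (1 - abSS s))
        (Measure.pi fun s : {s // s ∈ Finset.Icc t T} =>
          gaussianReal (Real.sqrt (abSS s) * x0) (Real.toNNReal (1 - abSS s)))
      = gaussianReal (Real.sqrt ab * x0) (Real.toNNReal (1 - ab)) :=
  stmt1_general t T x0 abSS ab hab hSS hsum
end

section
/- Let x₀ be distributed over one-hot vectors and suppose, given x₀, the variables x_t,…,x_T are conditionally independent with q(x_s|x₀) = exp{x₀ (log Q̄_s) x_sᵀ} (categorical with probability vector x₀Q̄_s for row-stochastic Q̄_s with positive entries). Let G_t = ∑_{s=t}^T log(Q̄_s x_sᵀ). Then the conditional probability of the tail value satisfies q(G_t = g | x₀) = exp{x₀ g} · #_g, where #_g is the number of tails (x_t,…,x_T) mapping to g, and in particular the ratio q(G_t = g | x₀)/q(G_t = g | x₀') = exp{(x₀ − x₀') g} does not depend on #_g. -/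
open scoped Classical

/-- For categorical star-shaped diffusion with one-hot `x₀ = eᵢ`, transition
matrices `Q̄_s` (row-stochastic, positive) and tail statistic
`G(xs)ᵢ = ∑_s log (Q̄_s)_{i, xs(s)}`, the conditional probability of the tail
statistic satisfies `q(G = g | x₀ = eᵢ) = exp(gᵢ) · #_g`, and the ratio
`q(G=g|eᵢ)/q(G=g|eᵢ') = exp(gᵢ − gᵢ')` does not depend on `#_g`. -/
theorem stmt17 {D : ℕ} (ι : Type*) [Fintype ι]
    (Q : ι → Matrix (Fin D) (Fin D) ℝ)
    (hpos : ∀ s i j, 0 < Q s i j) (hrow : ∀ s i, ∑ j, Q s i j = 1)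
    (g : Fin D → ℝ) :
    (∀ i : Fin D,
      (∑ xs ∈ Finset.univ.filter
          (fun xs : ι → Fin D => (fun a => ∑ s, Real.log (Q s a (xs s))) = g),
        ∏ s, Q s i (xs s))
      = Real.exp (g i) *
        (Finset.univ.filter
          (fun xs : ι → Fin D => (fun a => ∑ s, Real.log (Q s a (xs s))) = g)).card)
    ∧ ∀ i i' : Fin D,
      (∑ xs ∈ Finset.univ.filter
          (fun xs : ι → Fin D => (fun a => ∑ s, Real.log (Q s a (xs s))) = g),
        ∏ s, Q s i (xs s))
      = Real.exp (g i - g i') *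
        (∑ xs ∈ Finset.univ.filter
          (fun xs : ι → Fin D => (fun a => ∑ s, Real.log (Q s a (xs s))) = g),
        ∏ s, Q s i' (xs s)) := by
  have key : ∀ i : Fin D, ∀ xs ∈ Finset.univ.filter
      (fun xs : ι → Fin D => (fun a => ∑ s, Real.log (Q s a (xs s))) = g),
      ∏ s, Q s i (xs s) = Real.exp (g i) := by
    intro i xs hxs
    rw [Finset.mem_filter] at hxs
    have hg : ∑ s, Real.log (Q s i (xs s)) = g i := congrFun hxs.2 i
    rw [← hg, Real.exp_sum]
    exact Finset.prod_congr rfl fun s _ => (Real.exp_log (hpos s i (xs s))).symm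
  have h1 : ∀ i : Fin D,
      (∑ xs ∈ Finset.univ.filter
          (fun xs : ι → Fin D => (fun a => ∑ s, Real.log (Q s a (xs s))) = g),
        ∏ s, Q s i (xs s))
      = Real.exp (g i) *
        (Finset.univ.filter
          (fun xs : ι → Fin D => (fun a => ∑ s, Real.log (Q s a (xs s))) = g)).card := by
    intro i
    rw [Finset.sum_congr rfl (key i), Finset.sum_const, nsmul_eq_mul, mul_comm]
  refine ⟨h1, fun i i' => ?_⟩
  rw [h1 i, h1 i', ← mul_assoc, ← Real.exp_add, sub_add_cancel]
end
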